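/- Let n ≥ 3 and q ∈ ℂ, q ≠ 0, and fix s ∈ ℂ with s² = q. Let ℂ^{2n} have basis e_{−n},…,e_{−1},e_1,…,e_n, equipped with the symmetric bilinear form κ with κ(e_i,e_{−j}) = δ_{ij} and κ(e_i,e_j) = κ(e_{−i},e_{−j}) = 0 for i,j > 0. Let X_q ∈ End(ℂ^{2n}) be defined by: X_q e_{−j} = e_{−j−1} for 1 ≤ j ≤ n−2; X_q e_{−n+1} = e_{−n} − e_n; X_q e_{−n} = e_{n−1}; X_q e_1 = q·e_{−2}; X_q e_2 = −q·e_{−1} − e_1; X_q e_j = −e_{j−1} for 3 ≤ j ≤ n. Then: (1) for every ζ ∈ ℂ with ζ^{2n−2} = (−1)^n·4q, the vector f_ζ := Σ_{k=0}^{n−2} ζ^k e_{−n+k} + (1/2)ζ^{n−1} e_{−1} − e_n + Σ_{j=1}^{n−1} 2(−1)^{n−j+1} ζ^{j−n} e_j satisfies X_q f_ζ = ζ·f_ζ; (2) the vectors f_{0+} := q e_{−1} − e_1 + s(e_n + e_{−n}) and f_{0−} := q e_{−1} − e_1 − s(e_n + e_{−n}) satisfy X_q f_{0±} = 0 and are isotropic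 for κ; (3) the 2n−2 vectors f_ζ (ζ ranging over all solutions of ζ^{2n−2} = (−1)^n 4q) together with f_{0+} and f_{0−} form a basis of ℂ^{2n}, and they span the kernel of X_q in the 0-eigenspace sense: the kernel of X_q is spanned by f_{0+} and f_{0−}. -/

import Mathlib

/-- The `m`-th standard coordinate vector of `ℂ^N` (0-indexed). -/
noncomputable def stdv (N m : ℕ) : Fin N → ℂ := fun j => if (j : ℕ) = m then 1 else 0

/-- The basis vector `e_{-j}` (`1 ≤ j ≤ n`) of `ℂ^{2n}`, in the ordering
`(e_{-n},…,e_{-1},e_1,…,e_n)`. -/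
noncomputable def eneg (n j : ℕ) : Fin (2 * n) → ℂ := stdv (2 * n) (n - j)

/-- The basis vector `e_j` (`1 ≤ j ≤ n`) of `ℂ^{2n}`, in the ordering
`(e_{-n},…,e_{-1},e_1,…,e_n)`. -/
noncomputable def epos (n j : ℕ) : Fin (2 * n) → ℂ := stdv (2 * n) (n + j - 1)

/-- The symmetric bilinear form `κ` with `κ(e_i, e_{-j}) = δ_{ij}` and both families
`e_i`, `e_{-j}` isotropic: in coordinates, `κ(u,v) = Σ_i u_i v_{2n-1-i}`. -/
noncomputable def kapForm (n : ℕ) (u v : Fin (2 * n) → ℂ) : ℂ :=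
  ∑ i : Fin (2 * n), u i * v i.rev

/-- The eigenvector `f_ζ` of the cyclic element of the even quadric `Q^{2n-2}`. -/
noncomputable def quadEig (n : ℕ) (ζ : ℂ) : Fin (2 * n) → ℂ :=
  (∑ k ∈ Finset.range (n - 1), ζ ^ k • eneg n (n - k)) +
    ((1 / 2) * ζ ^ (n - 1)) • eneg n 1 - epos n n +
    ∑ j ∈ Finset.Icc 1 (n - 1),
      ((2 : ℂ) * (-1 : ℂ) ^ (n - j + 1) * ζ ^ ((j : ℤ) - (n : ℤ))) • epos n j

lemma sumIccTop {M : Type*} [AddCommMonoid M] (f : ℕ → M) {a b : ℕ} (h : a ≤ b + 1) :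
    ∑ j ∈ Finset.Icc a (b + 1), f j = (∑ j ∈ Finset.Icc a b, f j) + f (b + 1) := by
  rw [show Finset.Icc a (b+1) = insert (b+1) (Finset.Icc a b) by
      ext x; simp [Finset.mem_Icc]; omega,
    Finset.sum_insert (by simp [Finset.mem_Icc]), add_comm]

lemma sumIccBot {M : Type*} [AddCommMonoid M] (f : ℕ → M) {a b : ℕ} (h : a ≤ b) :
    ∑ j ∈ Finset.Icc a b, f j = f a + ∑ j ∈ Finset.Icc (a + 1) b, f j := by
  rw [show Finset.Icc a b = insert a (Finset.Icc (a+1) b) by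
      ext x; simp [Finset.mem_Icc]; omega,
    Finset.sum_insert (by simp [Finset.mem_Icc])]

lemma sumIccShift {M : Type*} [AddCommMonoid M] (f : ℕ → M) (a b c : ℕ) :
    ∑ j ∈ Finset.Icc (a + c) (b + c), f j = ∑ j ∈ Finset.Icc a b, f (j + c) := by
  rw [← Finset.map_add_right_Icc, Finset.sum_map]
  simp [addRightEmbedding]

/-- normal form for vectors in `ℂ^{2n}` as combos of `eneg`/`epos`. -/
noncomputable def Gfun (n : ℕ) (a b : ℕ → ℂ) : Fin (2 * n) → ℂ :=
  (∑ j ∈ Finset.Icc 1 n, a j • eneg n j) + ∑ j ∈ Finset.Icc 1 n, b j • epos n j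

lemma Gfun_congr {n : ℕ} {a b a' b' : ℕ → ℂ} (ha : ∀ j ∈ Finset.Icc 1 n, a j = a' j)
    (hb : ∀ j ∈ Finset.Icc 1 n, b j = b' j) : Gfun n a b = Gfun n a' b' := by
  unfold Gfun
  congr 1
  · exact Finset.sum_congr rfl (fun j hj => by rw [ha j hj])
  · exact Finset.sum_congr rfl (fun j hj => by rw [hb j hj])

lemma smul_Gfun (n : ℕ) (ζ : ℂ) (a b : ℕ → ℂ) :
    ζ • Gfun n a b = Gfun n (fun j => ζ * a j) (fun j => ζ * b j) := by
  simp [Gfun, Finset.smul_sum, smul_smul]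

lemma X_Gfun (n : ℕ) (hn : 3 ≤ n) (q : ℂ)
    (Xq : Module.End ℂ (Fin (2 * n) → ℂ))
    (hX1 : ∀ j : ℕ, 1 ≤ j → j ≤ n - 2 → Xq (eneg n j) = eneg n (j + 1))
    (hX2 : Xq (eneg n (n - 1)) = eneg n n - epos n n)
    (hX3 : Xq (eneg n n) = epos n (n - 1))
    (hX4 : Xq (epos n 1) = q • eneg n 2)
    (hX5 : Xq (epos n 2) = - (q • eneg n 1) - epos n 1)
    (hX6 : ∀ j : ℕ, 3 ≤ j → j ≤ n → Xq (epos n j) = - epos n (j - 1)) (a b : ℕ → ℂ) :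
    Xq (Gfun n a b) = Gfun n
      (fun j => if j = 1 then -(q * b 2) else if j = 2 then a 1 + q * b 1 else a (j - 1))
      (fun j => if j = n then -(a (n - 1)) else if j = n - 1 then a n - b n
        else -(b (j + 1))) := by
  obtain ⟨k, rfl⟩ : ∃ k, n = k + 3 := ⟨n - 3, by omega⟩
  rw [show k + 3 - 1 = k + 2 by omega] at hX2 hX3 ⊢
  rw [show k + 3 - 2 = k + 1 by omega] at hX1
  simp only [Gfun, map_add, map_sum, map_smul]
  have hS1 : ∑ j ∈ Finset.Icc 1 (k + 3), a j • Xq (eneg (k + 3) j)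
      = a 1 • eneg (k+3) 2 + (∑ j ∈ Finset.Icc 2 (k + 1), a j • eneg (k+3) (j + 1))
        + a (k + 2) • (eneg (k+3) (k+3) - epos (k+3) (k+3))
        + a (k + 3) • epos (k+3) (k + 2) := by
    rw [sumIccTop _ (by omega), show k + 2 = (k + 1) + 1 by omega,
      sumIccTop _ (by omega), show (k+1)+1 = k+2 by omega,
      sumIccBot _ (by omega), hX2, hX3,
      hX1 1 le_rfl (by omega),
      Finset.sum_congr rfl (fun j hj => by
        rw [hX1 j (by simp at hj; omega) (by simp at hj; omega)])]
  have hS2 : ∑ j ∈ Finset.Icc 1 (k + 3), b j • Xq (epos (k + 3) j)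
      = (q * b 1) • eneg (k+3) 2 + (-(q * b 2)) • eneg (k+3) 1 + (-(b 2)) • epos (k+3) 1
        + (- ∑ j ∈ Finset.Icc 2 (k + 1), b (j + 1) • epos (k+3) j)
        + (-(b (k + 3))) • epos (k+3) (k + 2) := by
    rw [sumIccBot _ (by omega), sumIccBot _ (by omega), hX4, hX5,
      sumIccTop _ (by omega),
      show Finset.Icc 3 (k+2) = Finset.Icc (2+1) ((k+1)+1) by norm_num,
      sumIccShift,
      hX6 (k + 3) (by omega) le_rfl,
      Finset.sum_congr rfl (fun j hj => by
        rw [hX6 (j+1) (by simp at hj; omega) (by simp at hj; omega),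
          show j + 1 - 1 = j by omega, smul_neg]),
      Finset.sum_neg_distrib,
      show k + 3 - 1 = k + 2 by omega]
    norm_num [smul_sub, smul_neg, smul_smul]
    module
  have hT1 : ∑ j ∈ Finset.Icc 1 (k + 3),
        (if j = 1 then -(q * b 2) else if j = 2 then a 1 + q * b 1 else a (j - 1)) •
          eneg (k+3) j
      = (-(q * b 2)) • eneg (k+3) 1 + (a 1 + q * b 1) • eneg (k+3) 2
        + ((∑ j ∈ Finset.Icc 2 (k + 1), a j • eneg (k+3) (j + 1))
          + a (k + 2) • eneg (k+3) (k + 3)) := by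
    rw [sumIccBot _ (by omega), sumIccBot _ (by omega),
      show Finset.Icc 3 (k+3) = Finset.Icc (2+1) ((k+2)+1) by norm_num,
      sumIccShift, sumIccTop _ (by omega),
      Finset.sum_congr rfl (fun j hj => by
        rw [if_neg (by simp at hj; omega), if_neg (by simp at hj; omega),
          show j + 1 - 1 = j by omega]),
      if_pos rfl, if_neg (by omega), if_pos rfl,
      if_neg (by omega), if_neg (by omega),
      show k + 2 + 1 - 1 = k + 2 by omega, show k + 2 + 1 = k + 3 by omega]
    abel
  have hT2 : ∑ j ∈ Finset.Icc 1 (k + 3),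
        (if j = k + 3 then -(a (k + 2)) else if j = k + 2 then a (k + 3) - b (k + 3)
          else -(b (j + 1))) • epos (k+3) j
      = (-(a (k + 2))) • epos (k+3) (k + 3) + (a (k + 3) - b (k + 3)) • epos (k+3) (k + 2)
        + ((-(b 2)) • epos (k+3) 1
          + (- ∑ j ∈ Finset.Icc 2 (k + 1), b (j + 1) • epos (k+3) j)) := by
    rw [sumIccTop _ (by omega), show k + 2 = (k+1)+1 by omega, sumIccTop _ (by omega),
      show (k+1)+1 = k + 2 by omega, sumIccBot _ (by omega),
      Finset.sum_congr rfl (fun j hj => by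
        rw [if_neg (by simp at hj; omega), if_neg (by simp at hj; omega), neg_smul]),
      Finset.sum_neg_distrib,
      if_pos rfl, if_neg (by omega), if_pos rfl,
      if_neg (by omega), if_neg (by omega)]
    abel
  rw [hS1, hS2, hT1, hT2]
  module

noncomputable def aFun (n : ℕ) (ζ : ℂ) : ℕ → ℂ :=
  fun j => if j = 1 then 1 / 2 * ζ ^ (n - 1) else ζ ^ (n - j)

noncomputable def bFun (n : ℕ) (ζ : ℂ) : ℕ → ℂ :=
  fun j => if j = n then (-1 : ℂ)
    else (2 : ℂ) * (-1 : ℂ) ^ (n - j + 1) * ζ ^ ((j : ℤ) - (n : ℤ))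

lemma quadEig_eq_G (n : ℕ) (hn : 3 ≤ n) (ζ : ℂ) :
    quadEig n ζ = Gfun n (aFun n ζ) (bFun n ζ) := by
  obtain ⟨k, rfl⟩ : ∃ k, n = k + 3 := ⟨n - 3, by omega⟩
  rw [quadEig, Gfun, show k + 3 - 1 = k + 2 by omega]
  have h1 : ∑ j ∈ Finset.Icc 1 (k + 3), aFun (k+3) ζ j • eneg (k+3) j
      = (1 / 2 * ζ ^ (k + 2)) • eneg (k+3) 1
        + ∑ kk ∈ Finset.range (k + 2), ζ ^ kk • eneg (k+3) (k + 3 - kk) := by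
    rw [sumIccBot _ (by omega)]
    have e : ∑ j ∈ Finset.Icc (1+1) (k+3), aFun (k+3) ζ j • eneg (k+3) j
        = ∑ kk ∈ Finset.range (k + 2), ζ ^ kk • eneg (k+3) (k + 3 - kk) := by
      rw [show Finset.Icc (1+1) (k+3) = Finset.Ico 2 (k+4) by
          ext x; simp [Finset.mem_Icc, Finset.mem_Ico]; omega,
        Finset.sum_Ico_eq_sum_range, show k + 4 - 2 = k + 2 by omega,
        ← Finset.sum_range_reflect]
      refine Finset.sum_congr rfl (fun i hi => ?_)
      simp only [Finset.mem_range] at hi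
      simp only [aFun]
      rw [if_neg (by omega), show k + 3 - (2 + (k + 2 - 1 - i)) = i by omega,
        show 2 + (k + 2 - 1 - i) = k + 3 - i by omega]
    rw [e]
    simp [aFun, show k + 3 - 1 = k + 2 by omega]
  have h2 : ∑ j ∈ Finset.Icc 1 (k + 3), bFun (k+3) ζ j • epos (k+3) j
      = (∑ j ∈ Finset.Icc 1 (k + 2),
          ((2 : ℂ) * (-1 : ℂ) ^ (k + 3 - j + 1) * ζ ^ ((j : ℤ) - ((k+3 : ℕ) : ℤ))) • epos (k+3) j)
        + (-1 : ℂ) • epos (k+3) (k + 3) := by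
    rw [sumIccTop _ (by omega)]
    have e : ∑ j ∈ Finset.Icc 1 (k+2), bFun (k+3) ζ j • epos (k+3) j
        = ∑ j ∈ Finset.Icc 1 (k + 2),
          ((2 : ℂ) * (-1 : ℂ) ^ (k + 3 - j + 1) * ζ ^ ((j : ℤ) - ((k+3 : ℕ) : ℤ))) • epos (k+3) j := by
      refine Finset.sum_congr rfl (fun j hj => ?_)
      simp only [Finset.mem_Icc] at hj
      simp only [bFun]
      rw [if_neg (by omega)]
    rw [e, show k + 2 + 1 = k + 3 by omega]
    simp [bFun]
  rw [h1, h2, neg_one_smul]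
  module

lemma eigenEq (n : ℕ) (hn : 3 ≤ n) (q : ℂ) (hq : q ≠ 0)
    (Xq : Module.End ℂ (Fin (2 * n) → ℂ))
    (hX1 : ∀ j : ℕ, 1 ≤ j → j ≤ n - 2 → Xq (eneg n j) = eneg n (j + 1))
    (hX2 : Xq (eneg n (n - 1)) = eneg n n - epos n n)
    (hX3 : Xq (eneg n n) = epos n (n - 1))
    (hX4 : Xq (epos n 1) = q • eneg n 2)
    (hX5 : Xq (epos n 2) = - (q • eneg n 1) - epos n 1)
    (hX6 : ∀ j : ℕ, 3 ≤ j → j ≤ n → Xq (epos n j) = - epos n (j - 1))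
    (ζ : ℂ) (hζ : ζ ^ (2 * n - 2) = (-1) ^ n * (4 * q)) :
    Xq (quadEig n ζ) = ζ • quadEig n ζ := by
  have hζ0 : ζ ≠ 0 := by
    intro h
    rw [h, zero_pow (by omega)] at hζ
    rcases mul_eq_zero.mp hζ.symm with h' | h'
    · exact pow_ne_zero n (by norm_num : (-1:ℂ) ≠ 0) h'
    · exact hq (by linear_combination h' / 4)
  obtain ⟨k, rfl⟩ : ∃ k, n = k + 3 := ⟨n - 3, by omega⟩
  rw [show 2 * (k + 3) - 2 = 2 * k + 4 by omega] at hζ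
  have hz : ∀ (t : ℕ), ζ ^ (-(t : ℤ)) = (ζ ^ t)⁻¹ := fun t => by
    rw [zpow_neg, zpow_natCast]
  rw [quadEig_eq_G (k+3) hn ζ, X_Gfun (k+3) hn q Xq hX1 hX2 hX3 hX4 hX5 hX6,
    smul_Gfun]
  apply Gfun_congr
  · intro j hj
    simp only [Finset.mem_Icc] at hj
    by_cases h1 : j = 1
    · subst h1; rw [if_pos rfl]; simp only [aFun, bFun]
      rw [if_neg (show ¬(2 = k + 3) by omega), if_pos trivial,
        show k + 3 - 2 + 1 = k + 2 by omega, show k + 3 - 1 = k + 2 by omega,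
        show ((2 : ℕ) : ℤ) - ((k + 3 : ℕ) : ℤ) = -((k + 1 : ℕ) : ℤ) by push_cast; ring,
        hz]
      field_simp
      linear_combination -hζ
    by_cases h2 : j = 2
    · subst h2; rw [if_neg (by omega), if_pos rfl]; simp only [aFun, bFun]
      rw [if_pos trivial, if_neg (show ¬(1 = k + 3) by omega),
        if_neg (show ¬(2 = 1) by omega),
        show k + 3 - 1 + 1 = k + 3 by omega, show k + 3 - 1 = k + 2 by omega,
        show k + 3 - 2 = k + 1 by omega,
        show ((1 : ℕ) : ℤ) - ((k + 3 : ℕ) : ℤ) = -((k + 2 : ℕ) : ℤ) by push_cast; ring,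
        hz]
      field_simp
      linear_combination -hζ
    · rw [if_neg h1, if_neg h2]
      obtain ⟨d, rfl⟩ : ∃ d, j = d + 3 := ⟨j - 3, by omega⟩
      simp only [aFun]
      rw [if_neg (by omega), if_neg (by omega),
        show d + 3 - 1 = d + 2 by omega,
        show k + 3 - (d + 2) = (k - d) + 1 by omega,
        show k + 3 - (d + 3) = k - d by omega, pow_succ]
      ring
  · intro j hj
    simp only [Finset.mem_Icc] at hj
    by_cases h1 : j = k + 3
    · subst h1; rw [if_pos rfl, show k + 3 - 1 = k + 2 by omega]
      simp only [aFun, bFun]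
      rw [if_neg (by omega), if_pos trivial, show k + 3 - (k + 2) = 1 by omega]
      ring
    by_cases h2 : j = k + 2
    · subst h2; rw [if_neg (by omega), if_pos (by omega : k + 2 = k + 3 - 1)]
      simp only [aFun, bFun]
      rw [if_neg (by omega), if_pos trivial, if_neg (by omega),
        show k + 3 - (k + 3) = 0 by omega, show k + 3 - (k + 2) + 1 = 2 by omega,
        show ((k + 2 : ℕ) : ℤ) - ((k + 3 : ℕ) : ℤ) = -((1 : ℕ) : ℤ) by push_cast; ring,
        hz]
      field_simp
      ring
    · rw [if_neg (by omega), if_neg (by omega)]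
      simp only [bFun]
      rw [if_neg (by omega), if_neg (by omega)]
      obtain ⟨d, hd⟩ : ∃ d, k + 3 - j = d + 2 := ⟨k + 1 - j, by omega⟩
      rw [show k + 3 - (j + 1) + 1 = d + 2 by omega,
        show k + 3 - j + 1 = d + 3 by omega,
        show ((j + 1 : ℕ) : ℤ) - ((k + 3 : ℕ) : ℤ) = -((d + 1 : ℕ) : ℤ) by push_cast; omega,
        show ((j : ℕ) : ℤ) - ((k + 3 : ℕ) : ℤ) = -((d + 2 : ℕ) : ℤ) by push_cast; omega,
        hz, hz]
      field_simp
      ring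

lemma kerVec (n : ℕ) (hn : 3 ≤ n) (q : ℂ)
    (Xq : Module.End ℂ (Fin (2 * n) → ℂ))
    (hX1 : ∀ j : ℕ, 1 ≤ j → j ≤ n - 2 → Xq (eneg n j) = eneg n (j + 1))
    (hX3 : Xq (eneg n n) = epos n (n - 1))
    (hX4 : Xq (epos n 1) = q • eneg n 2)
    (hX6 : ∀ j : ℕ, 3 ≤ j → j ≤ n → Xq (epos n j) = - epos n (j - 1))
    (t : ℂ) :
    Xq (q • eneg n 1 - epos n 1 + t • (epos n n + eneg n n)) = 0 := by
  have h1 : Xq (eneg n 1) = eneg n 2 := hX1 1 le_rfl (by omega)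
  have h6 : Xq (epos n n) = - epos n (n - 1) := hX6 n (by omega) le_rfl
  simp only [map_add, map_sub, map_smul, h1, hX3, hX4, h6]
  module

noncomputable def Ecof (n : ℕ) (q t : ℂ) (v : ℕ) : ℂ :=
  (if v = n - 1 then q else 0) - (if v = n then 1 else 0)
    + (if v = 2 * n - 1 then t else 0) + (if v = 0 then t else 0)

lemma Ecof_nm1 (n : ℕ) (hn : 3 ≤ n) (q t : ℂ) : Ecof n q t (n - 1) = q := by
  unfold Ecof
  rw [if_pos rfl, if_neg (by omega), if_neg (by omega), if_neg (by omega)]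
  ring

lemma Ecof_n (n : ℕ) (hn : 3 ≤ n) (q t : ℂ) : Ecof n q t n = -1 := by
  unfold Ecof
  rw [if_pos rfl, if_neg (by omega), if_neg (by omega), if_neg (by omega)]
  ring

lemma Ecof_0 (n : ℕ) (hn : 3 ≤ n) (q t : ℂ) : Ecof n q t 0 = t := by
  unfold Ecof
  rw [if_pos rfl, if_neg (by omega), if_neg (by omega), if_neg (by omega)]
  ring

lemma Ecof_last (n : ℕ) (hn : 3 ≤ n) (q t : ℂ) : Ecof n q t (2 * n - 1) = t := by
  unfold Ecof
  rw [if_pos rfl, if_neg (by omega), if_neg (by omega), if_neg (by omega)]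
  ring

lemma fz_coord (n : ℕ) (hn : 3 ≤ n) (q t : ℂ) :
    (q • eneg n 1 - epos n 1 + t • (epos n n + eneg n n))
      = fun i : Fin (2 * n) => Ecof n q t (i : ℕ) := by
  funext i
  simp only [Pi.add_apply, Pi.sub_apply, Pi.smul_apply, smul_eq_mul, eneg, epos, stdv,
    Ecof]
  rw [show n - n = 0 by omega, show n + n - 1 = 2 * n - 1 by omega,
    show n + 1 - 1 = n by omega]
  split_ifs <;> ring

lemma sum_ind_mul {N : ℕ} (c : ℕ) (hc : c < N) (x : ℂ) (g : Fin N → ℂ) :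
    ∑ i : Fin N, (if (i : ℕ) = c then x else 0) * g i = x * g ⟨c, hc⟩ := by
  rw [Finset.sum_eq_single (⟨c, hc⟩ : Fin N)]
  · simp
  · intro b _ hb
    rw [if_neg (fun h => hb (Fin.ext h)), zero_mul]
  · intro h; exact absurd (Finset.mem_univ _) h

lemma kap_val (n : ℕ) (hn : 3 ≤ n) (q t : ℂ) :
    kapForm n (q • eneg n 1 - epos n 1 + t • (epos n n + eneg n n))
      (q • eneg n 1 - epos n 1 + t • (epos n n + eneg n n)) = 2 * t ^ 2 - 2 * q := by
  rw [kapForm, fz_coord n hn q t]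
  simp only [Fin.val_rev]
  have hsplit : ∀ i : Fin (2 * n),
      Ecof n q t (i : ℕ) * Ecof n q t (2 * n - ((i : ℕ) + 1))
        = (if (i : ℕ) = n - 1 then q else (0:ℂ)) * Ecof n q t (2 * n - ((i : ℕ) + 1))
          - (if (i : ℕ) = n then (1:ℂ) else 0) * Ecof n q t (2 * n - ((i : ℕ) + 1))
          + (if (i : ℕ) = 2 * n - 1 then t else 0) * Ecof n q t (2 * n - ((i : ℕ) + 1))
          + (if (i : ℕ) = 0 then t else 0) * Ecof n q t (2 * n - ((i : ℕ) + 1)) := by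
    intro i
    rw [Ecof]
    ring
  calc ∑ i : Fin (2 * n), Ecof n q t (i : ℕ) * Ecof n q t (2 * n - ((i : ℕ) + 1))
      = ∑ i : Fin (2 * n),
          ((if (i : ℕ) = n - 1 then q else (0:ℂ)) * Ecof n q t (2 * n - ((i : ℕ) + 1))
          - (if (i : ℕ) = n then (1:ℂ) else 0) * Ecof n q t (2 * n - ((i : ℕ) + 1))
          + (if (i : ℕ) = 2 * n - 1 then t else 0) * Ecof n q t (2 * n - ((i : ℕ) + 1))
          + (if (i : ℕ) = 0 then t else 0) * Ecof n q t (2 * n - ((i : ℕ) + 1))) :=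
        Finset.sum_congr rfl (fun i _ => hsplit i)
    _ = 2 * t ^ 2 - 2 * q := by
        simp only [Finset.sum_add_distrib, Finset.sum_sub_distrib]
        rw [sum_ind_mul (n - 1) (by omega), sum_ind_mul n (by omega),
          sum_ind_mul (2 * n - 1) (by omega), sum_ind_mul 0 (by omega)]
        simp only []
        rw [show 2 * n - (n - 1 + 1) = n by omega, show 2 * n - (n + 1) = n - 1 by omega,
          show 2 * n - (2 * n - 1 + 1) = 0 by omega, show 2 * n - (0 + 1) = 2 * n - 1 by omega,
          Ecof_n n hn q t, Ecof_nm1 n hn q t, Ecof_0 n hn q t, Ecof_last n hn q t]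
        ring

lemma quadEig_last (n : ℕ) (hn : 3 ≤ n) (ζ : ℂ) :
    quadEig n ζ ⟨2 * n - 1, by omega⟩ = -1 := by
  simp only [quadEig, Pi.add_apply, Pi.sub_apply, Pi.smul_apply, Finset.sum_apply,
    smul_eq_mul, eneg, epos, stdv]
  rw [Finset.sum_eq_zero (fun k hk => by
      simp only [Finset.mem_range] at hk
      rw [if_neg (by omega), mul_zero]),
    Finset.sum_eq_zero (fun j hj => by
      simp only [Finset.mem_Icc] at hj
      rw [if_neg (by omega), mul_zero]),
    if_neg (by omega), if_pos (by omega)]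
  ring

/-- diagonalization of the cyclic element `X_q` of the even quadric
`Q^{2n-2}` (`q ≠ 0`, `s² = q`): the `f_ζ` for `ζ^{2n-2} = (-1)^n 4q` are eigenvectors
with eigenvalue `ζ`; `f_{0±} = q e_{-1} - e_1 ± s(e_n + e_{-n})` are isotropic kernel
vectors; all together they form a basis of `ℂ^{2n}`, and `ker X_q = span(f_{0+}, f_{0-})`. -/
theorem statement6 (n : ℕ) (hn : 3 ≤ n) (q : ℂ) (hq : q ≠ 0) (s : ℂ) (hs : s ^ 2 = q)
    (Xq : Module.End ℂ (Fin (2 * n) → ℂ))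
    (hX1 : ∀ j : ℕ, 1 ≤ j → j ≤ n - 2 → Xq (eneg n j) = eneg n (j + 1))
    (hX2 : Xq (eneg n (n - 1)) = eneg n n - epos n n)
    (hX3 : Xq (eneg n n) = epos n (n - 1))
    (hX4 : Xq (epos n 1) = q • eneg n 2)
    (hX5 : Xq (epos n 2) = - (q • eneg n 1) - epos n 1)
    (hX6 : ∀ j : ℕ, 3 ≤ j → j ≤ n → Xq (epos n j) = - epos n (j - 1)) :
    (∀ ζ : ℂ, ζ ^ (2 * n - 2) = (-1) ^ n * (4 * q) →
        Xq (quadEig n ζ) = ζ • quadEig n ζ) ∧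
    (Xq (q • eneg n 1 - epos n 1 + s • (epos n n + eneg n n)) = 0 ∧
     Xq (q • eneg n 1 - epos n 1 - s • (epos n n + eneg n n)) = 0 ∧
     kapForm n (q • eneg n 1 - epos n 1 + s • (epos n n + eneg n n))
       (q • eneg n 1 - epos n 1 + s • (epos n n + eneg n n)) = 0 ∧
     kapForm n (q • eneg n 1 - epos n 1 - s • (epos n n + eneg n n))
       (q • eneg n 1 - epos n 1 - s • (epos n n + eneg n n)) = 0) ∧
    (∃ bas : Module.Basis (({ζ : ℂ // ζ ^ (2 * n - 2) = (-1) ^ n * (4 * q)}) ⊕ Bool) ℂ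
        (Fin (2 * n) → ℂ),
      (∀ ζ : {ζ : ℂ // ζ ^ (2 * n - 2) = (-1) ^ n * (4 * q)},
          bas (Sum.inl ζ) = quadEig n (ζ : ℂ)) ∧
      bas (Sum.inr true) = q • eneg n 1 - epos n 1 + s • (epos n n + eneg n n) ∧
      bas (Sum.inr false) = q • eneg n 1 - epos n 1 - s • (epos n n + eneg n n)) ∧
    LinearMap.ker Xq = Submodule.span ℂ
      {q • eneg n 1 - epos n 1 + s • (epos n n + eneg n n),
       q • eneg n 1 - epos n 1 - s • (epos n n + eneg n n)} := by
  classical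
  have hs0 : s ≠ 0 := by intro h; apply hq; rw [← hs, h]; ring
  have hc : ((-1 : ℂ) ^ n * (4 * q)) ≠ 0 :=
    mul_ne_zero (pow_ne_zero _ (by norm_num))
      (fun h => hq (by linear_combination h / 4))
  have hm0 : 0 < 2 * n - 2 := by omega
  have part1 : ∀ ζ : ℂ, ζ ^ (2 * n - 2) = (-1) ^ n * (4 * q) →
      Xq (quadEig n ζ) = ζ • quadEig n ζ :=
    fun ζ hζ => eigenEq n hn q hq Xq hX1 hX2 hX3 hX4 hX5 hX6 ζ hζ
  have hkerp : Xq (q • eneg n 1 - epos n 1 + s • (epos n n + eneg n n)) = 0 :=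
    kerVec n hn q Xq hX1 hX3 hX4 hX6 s
  have hmineq : q • eneg n 1 - epos n 1 - s • (epos n n + eneg n n)
      = q • eneg n 1 - epos n 1 + (-s) • (epos n n + eneg n n) := by module
  have hkerm : Xq (q • eneg n 1 - epos n 1 - s • (epos n n + eneg n n)) = 0 := by
    rw [hmineq]; exact kerVec n hn q Xq hX1 hX3 hX4 hX6 (-s)
  have hnz : ∀ ζ : ℂ, quadEig n ζ ≠ 0 := fun ζ h => by
    have h2 := congrFun h ⟨2 * n - 1, by omega⟩
    rw [quadEig_last n hn ζ] at h2
    simpa using h2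
  have hXpow : ∀ (x : Fin (2 * n) → ℂ) (μ : ℂ), Xq x = μ • x →
      ∀ t : ℕ, (Xq ^ t) x = μ ^ t • x := by
    intro x μ hx t
    induction t with
    | zero => simp
    | succ t ih =>
        rw [pow_succ, Module.End.mul_apply, hx, map_smul, ih, smul_smul, ← pow_succ']
  -- Fintype and cardinality of the root set
  have hsepp : (Polynomial.X ^ (2 * n - 2) - Polynomial.C ((-1 : ℂ) ^ n * (4 * q))).Separable :=
    Polynomial.separable_X_pow_sub_C _ (Nat.cast_ne_zero.mpr (by omega)) hc
  have hnodup : (Polynomial.nthRoots (2 * n - 2) ((-1 : ℂ) ^ n * (4 * q))).Nodup :=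
    Polynomial.nodup_roots hsepp
  have hcardm : Multiset.card (Polynomial.nthRoots (2 * n - 2) ((-1 : ℂ) ^ n * (4 * q)))
      = 2 * n - 2 := by
    have hsp : (Polynomial.X ^ (2 * n - 2) - Polynomial.C ((-1 : ℂ) ^ n * (4 * q))).Splits
        := IsAlgClosed.splits _
    have h1 := (Polynomial.splits_iff_card_roots).mp hsp
    rwa [Polynomial.natDegree_X_pow_sub_C] at h1
  let e : {ζ : ℂ // ζ ^ (2 * n - 2) = (-1) ^ n * (4 * q)} ≃
      {x // x ∈ (Polynomial.nthRoots (2 * n - 2) ((-1 : ℂ) ^ n * (4 * q))).toFinset} :=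
    Equiv.subtypeEquivRight (fun x => by
      rw [Multiset.mem_toFinset, Polynomial.mem_nthRoots hm0])
  haveI : Fintype {ζ : ℂ // ζ ^ (2 * n - 2) = (-1) ^ n * (4 * q)} := Fintype.ofEquiv _ e.symm
  have hcardR : Fintype.card {ζ : ℂ // ζ ^ (2 * n - 2) = (-1) ^ n * (4 * q)} = 2 * n - 2 := by
    rw [Fintype.card_congr e, Fintype.card_coe, Multiset.toFinset_card_of_nodup hnodup,
      hcardm]
  have hzeta : ∀ ζ : {ζ : ℂ // ζ ^ (2 * n - 2) = (-1) ^ n * (4 * q)}, (ζ : ℂ) ≠ 0 := by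
    rintro ⟨ζ, hζ⟩ h
    simp only at h
    rw [h, zero_pow (by omega)] at hζ
    exact hc hζ.symm
  -- the candidate basis family
  have hcoordp : ∀ i : Fin (2 * n),
      (q • eneg n 1 - epos n 1 + s • (epos n n + eneg n n)) i = Ecof n q s (i : ℕ) :=
    fun i => congrFun (fz_coord n hn q s) i
  have hcoordm : ∀ i : Fin (2 * n),
      (q • eneg n 1 - epos n 1 - s • (epos n n + eneg n n)) i = Ecof n q (-s) (i : ℕ) :=
    fun i => by rw [hmineq]; exact congrFun (fz_coord n hn q (-s)) i
  set fp : Fin (2 * n) → ℂ := q • eneg n 1 - epos n 1 + s • (epos n n + eneg n n) with hfpdef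
  set fm : Fin (2 * n) → ℂ := q • eneg n 1 - epos n 1 - s • (epos n n + eneg n n) with hfmdef
  set v : ({ζ : ℂ // ζ ^ (2 * n - 2) = (-1) ^ n * (4 * q)} ⊕ Bool) → (Fin (2 * n) → ℂ) :=
    Sum.elim (fun ζ => quadEig n (ζ : ℂ)) (fun b => cond b fp fm) with hvdef
  have hLIeig : LinearIndependent ℂ
      (fun ζ : {ζ : ℂ // ζ ^ (2 * n - 2) = (-1) ^ n * (4 * q)} => quadEig n (ζ : ℂ)) :=
    Module.End.eigenvectors_linearIndependent' Xq
      (fun ζ : {ζ : ℂ // ζ ^ (2 * n - 2) = (-1) ^ n * (4 * q)} => (ζ : ℂ))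
      Subtype.coe_injective _
      (fun ζ => ⟨Module.End.mem_eigenspace_iff.mpr (part1 ζ.1 ζ.2), hnz ζ.1⟩)
  have hboolzero : ∀ gt gf : ℂ, gt • fp + gf • fm = 0 → gt = 0 ∧ gf = 0 := by
    intro gt gf hg'
    have h00 := congrFun hg' ⟨0, by omega⟩
    have h11 := congrFun hg' ⟨n - 1, by omega⟩
    simp only [Pi.add_apply, Pi.smul_apply, smul_eq_mul, Pi.zero_apply, hcoordp, hcoordm]
      at h00 h11
    have e0 : gt * s + gf * (-s) = 0 := by
      have v1 : Ecof n q s ((⟨0, by omega⟩ : Fin (2 * n)) : ℕ) = s := Ecof_0 n hn q s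
      have v2 : Ecof n q (-s) ((⟨0, by omega⟩ : Fin (2 * n)) : ℕ) = -s := Ecof_0 n hn q (-s)
      rw [v1, v2] at h00
      exact h00
    have e1 : gt * q + gf * q = 0 := by
      have v1 : Ecof n q s ((⟨n - 1, by omega⟩ : Fin (2 * n)) : ℕ) = q := Ecof_nm1 n hn q s
      have v2 : Ecof n q (-s) ((⟨n - 1, by omega⟩ : Fin (2 * n)) : ℕ) = q := Ecof_nm1 n hn q (-s)
      rw [v1, v2] at h11
      exact h11
    have h' : (gt - gf) * s = 0 := by linear_combination e0
    have h'' : (gt + gf) * q = 0 := by linear_combination e1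
    have hd : gt - gf = 0 := by
      rcases mul_eq_zero.mp h' with h | h
      · exact h
      · exact absurd h hs0
    have hsum : gt + gf = 0 := by
      rcases mul_eq_zero.mp h'' with h | h
      · exact h
      · exact absurd h hq
    constructor
    · linear_combination (hd + hsum) / 2
    · linear_combination (hsum - hd) / 2
  have hVLI : LinearIndependent ℂ v := by
    rw [Fintype.linearIndependent_iff]
    intro g hg
    have h2 : ∀ b : Bool, Xq (v (Sum.inr b)) = 0 := by
      intro b
      cases b
      · simpa [hvdef] using hkerm
      · simpa [hvdef] using hkerp
    have happ : ∑ i, g i • (Xq ^ (2 * n - 2)) (v i) = 0 := by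
      have h3 := congrArg (fun y => (Xq ^ (2 * n - 2)) y) hg
      simpa [map_sum, map_smul] using h3
    rw [Fintype.sum_sum_type] at happ
    have hrw1 : ∀ ζ : {ζ : ℂ // ζ ^ (2 * n - 2) = (-1) ^ n * (4 * q)},
        g (Sum.inl ζ) • (Xq ^ (2 * n - 2)) (v (Sum.inl ζ))
          = (g (Sum.inl ζ) * ((-1) ^ n * (4 * q))) • quadEig n (ζ : ℂ) := by
      intro ζ
      have : (Xq ^ (2 * n - 2)) (v (Sum.inl ζ)) = ((-1) ^ n * (4 * q)) • quadEig n (ζ : ℂ) := by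
        have hx := hXpow (quadEig n (ζ : ℂ)) (ζ : ℂ) (part1 ζ.1 ζ.2) (2 * n - 2)
        rw [hvdef]
        simpa [ζ.2] using hx
      rw [this, smul_smul]
    have hrw2 : ∀ b : Bool, g (Sum.inr b) • (Xq ^ (2 * n - 2)) (v (Sum.inr b)) = 0 := by
      intro b
      have : (Xq ^ (2 * n - 2)) (v (Sum.inr b)) = 0 := by
        rw [hXpow _ 0 (by rw [h2 b, zero_smul]) (2 * n - 2), zero_pow (by omega), zero_smul]
      rw [this, smul_zero]
    rw [Finset.sum_congr rfl (fun ζ _ => hrw1 ζ), Finset.sum_congr rfl (fun b _ => hrw2 b),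
      Finset.sum_const_zero, add_zero] at happ
    have hinl : ∀ ζ, g (Sum.inl ζ) = 0 := by
      intro ζ
      have hz1 := Fintype.linearIndependent_iff.mp hLIeig _ happ ζ
      rcases mul_eq_zero.mp hz1 with h | h
      · exact h
      · exact absurd h hc
    have hg' : g (Sum.inr true) • fp + g (Sum.inr false) • fm = 0 := by
      rw [Fintype.sum_sum_type] at hg
      rw [Finset.sum_eq_zero (fun ζ _ => by rw [hinl ζ, zero_smul]), zero_add,
        Fintype.sum_bool] at hg
      simpa [hvdef] using hg
    obtain ⟨ht0, hf0⟩ := hboolzero _ _ hg'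
    intro i
    rcases i with ζ | b
    · exact hinl ζ
    · cases b
      · exact hf0
      · exact ht0
  haveI : Nonempty ({ζ : ℂ // ζ ^ (2 * n - 2) = (-1) ^ n * (4 * q)} ⊕ Bool) := ⟨Sum.inr true⟩
  have hcards : Fintype.card ({ζ : ℂ // ζ ^ (2 * n - 2) = (-1) ^ n * (4 * q)} ⊕ Bool)
      = Module.finrank ℂ (Fin (2 * n) → ℂ) := by
    rw [Fintype.card_sum, hcardR, Fintype.card_bool, Module.finrank_fin_fun]
    omega
  let bas := basisOfLinearIndependentOfCardEqFinrank hVLI hcards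
  have hbas : ⇑bas = v := coe_basisOfLinearIndependentOfCardEqFinrank _ _
  refine ⟨part1, ⟨hkerp, hkerm, ?_, ?_⟩, ⟨bas, ?_, ?_, ?_⟩, ?_⟩
  · rw [kap_val n hn q s]; linear_combination 2 * hs
  · rw [hmineq, kap_val n hn q (-s)]; linear_combination 2 * hs
  · intro ζ; rw [hbas]; rfl
  · rw [hbas]; rfl
  · rw [hbas]; rfl
  -- kernel = span
  apply le_antisymm
  · intro x hx
    have hx0 : Xq x = 0 := LinearMap.mem_ker.mp hx
    have hrep := bas.sum_repr x
    set r : ({ζ : ℂ // ζ ^ (2 * n - 2) = (-1) ^ n * (4 * q)} ⊕ Bool) → ℂ :=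
      fun i => bas.repr x i with hrdef
    set g : ({ζ : ℂ // ζ ^ (2 * n - 2) = (-1) ^ n * (4 * q)} ⊕ Bool) → ℂ :=
      Sum.elim (fun ζ => r (Sum.inl ζ) * (ζ : ℂ)) (fun _ => 0) with hgdef
    have hsplit : ∑ ζ, r (Sum.inl ζ) • bas (Sum.inl ζ)
        = x - ∑ b : Bool, r (Sum.inr b) • bas (Sum.inr b) := by
      rw [eq_sub_iff_add_eq, ← Fintype.sum_sum_type (fun i => r i • bas i)]
      exact hrep
    have hgz : ∑ i, g i • bas i = 0 := by
      rw [Fintype.sum_sum_type]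
      have hz2 : ∀ b : Bool, g (Sum.inr b) • bas (Sum.inr b) = 0 := fun b => by
        simp [hgdef]
      rw [Finset.sum_congr rfl (fun b _ => hz2 b), Finset.sum_const_zero, add_zero]
      have hz1 : ∀ ζ, g (Sum.inl ζ) • bas (Sum.inl ζ)
          = r (Sum.inl ζ) • Xq (bas (Sum.inl ζ)) := fun ζ => by
        have : Xq (bas (Sum.inl ζ)) = (ζ : ℂ) • quadEig n (ζ : ℂ) := by
          rw [hbas]; exact part1 ζ.1 ζ.2
        rw [this, hgdef, smul_smul]
        have : bas (Sum.inl ζ) = quadEig n (ζ : ℂ) := by rw [hbas]; rfl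
        rw [this]
        simp [mul_comm]
      rw [Finset.sum_congr rfl (fun ζ _ => hz1 ζ)]
      calc ∑ ζ, r (Sum.inl ζ) • Xq (bas (Sum.inl ζ))
          = Xq (∑ ζ, r (Sum.inl ζ) • bas (Sum.inl ζ)) := by rw [map_sum]; simp [map_smul]
        _ = Xq (x - ∑ b : Bool, r (Sum.inr b) • bas (Sum.inr b)) := by rw [hsplit]
        _ = 0 := by
            rw [map_sub, hx0, map_sum, Fintype.sum_bool]
            have e1 : Xq (r (Sum.inr true) • bas (Sum.inr true)) = 0 := by
              rw [map_smul, hbas]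
              have : v (Sum.inr true) = fp := rfl
              rw [this, hkerp, smul_zero]
            have e2 : Xq (r (Sum.inr false) • bas (Sum.inr false)) = 0 := by
              rw [map_smul, hbas]
              have : v (Sum.inr false) = fm := rfl
              rw [this, hkerm, smul_zero]
            rw [e1, e2]
            simp
    have hallz := Fintype.linearIndependent_iff.mp bas.linearIndependent g hgz
    have hrz : ∀ ζ, r (Sum.inl ζ) = 0 := by
      intro ζ
      have := hallz (Sum.inl ζ)
      rw [hgdef] at this
      simp only [Sum.elim_inl] at this
      rcases mul_eq_zero.mp this with h | h
      · exact h
      · exact absurd h (hzeta ζ)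
    have hxe : x = ∑ b : Bool, r (Sum.inr b) • bas (Sum.inr b) := by
      rw [← hrep, Fintype.sum_sum_type,
        Finset.sum_eq_zero (fun ζ _ => by rw [show bas.repr x (Sum.inl ζ) = r (Sum.inl ζ) from rfl, hrz ζ, zero_smul]),
        zero_add]
    rw [hxe, Fintype.sum_bool]
    have hmem1 : fp ∈ ({fp, fm} : Set (Fin (2 * n) → ℂ)) := by simp
    have hmem2 : fm ∈ ({fp, fm} : Set (Fin (2 * n) → ℂ)) := by simp
    refine Submodule.add_mem _ ?_ ?_
    · refine Submodule.smul_mem _ _ (Submodule.subset_span ?_)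
      rw [hbas]; exact hmem1
    · refine Submodule.smul_mem _ _ (Submodule.subset_span ?_)
      rw [hbas]; exact hmem2
  · rw [Submodule.span_le]
    intro y hy
    rcases hy with rfl | hy
    · exact LinearMap.mem_ker.mpr hkerp
    · rw [Set.mem_singleton_iff] at hy
      subst hy
      exact LinearMap.mem_ker.mpr hkerm
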